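/- arXiv:1707.06840 — 2 statements merged into one kernel-verified Lean document; each statement's English description precedes it below -/
import Mathlib

section
/- Let n ≥ 1 and let W = S_{n+1} be the Weyl group of type A_n. Suppose w_1, …, w_k ∈ W are such that the positive roots Δ⁺ are the disjoint union Δ⁺ = Φ_{w_1} ⊔ Φ_{w_2} ⊔ ⋯ ⊔ Φ_{w_k} of their inversion sets. If u ∈ W satisfies w_i ≤ w_i u in the Bruhat order for every i = 1, …, k, then u = e (the identity). -/
open RealInnerProductSpace

noncomputable section

variable {V : Type*} [NormedAddCommGroup V] [InnerProductSpace ℝ V] [FiniteDimensional ℝ V]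

/-- Orthogonal reflection of `V` in the hyperplane orthogonal to `α`. -/
def reflRoot (α : V) : V ≃ₗᵢ[ℝ] V := Submodule.reflection (ℝ ∙ α)ᗮ

/-- The inversion set `Φ_w = w⁻¹Δ⁻ ∩ Δ⁺ = {α ∈ Δ⁺ | w α ∈ Δ⁻}`, where `Δ⁻ = -Δ⁺`
(so `w α ∈ Δ⁻ ↔ -(w α) ∈ Δ⁺`). -/
def invSet (pos : Set V) (w : V ≃ₗᵢ[ℝ] V) : Set V := {α | α ∈ pos ∧ -(w α) ∈ pos}

/-- The length of `w`, i.e. the number of inversions of `w`. -/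
def invLen (pos : Set V) (w : V ≃ₗᵢ[ℝ] V) : ℕ := (invSet pos w).ncard

/-- The Bruhat order on the Weyl group: the reflexive-transitive closure of the relation
`x ⋖ x * s_α` (right multiplication by the reflection in a root `α`) whenever the length
(= number of inversions) increases. -/
def bruhatLE (roots pos : Set V) : (V ≃ₗᵢ[ℝ] V) → (V ≃ₗᵢ[ℝ] V) → Prop :=
  Relation.ReflTransGen
    (fun x y => (∃ α ∈ roots, y = x * reflRoot α) ∧ invLen pos x < invLen pos y)

/-- The standard basis vector `ε_p` of `ℝ^m`. -/
def eps (m : ℕ) (p : Fin m) : EuclideanSpace ℝ (Fin m) := EuclideanSpace.single p (1 : ℝ)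

/-- `ρ`, one half the sum of the positive roots. -/
def rho (pos : Set V) : V := (2⁻¹ : ℝ) • ∑ᶠ α ∈ pos, α

/-- The positive roots of type `A_n`: `ε_p - ε_q` for `p < q`. -/
def posA (n : ℕ) : Set (EuclideanSpace ℝ (Fin (n + 1))) :=
  {v | ∃ p q : Fin (n + 1), p < q ∧ v = eps (n + 1) p - eps (n + 1) q}

/-- The roots of type `A_n`: `ε_p - ε_q` for `p ≠ q`. -/
def rootsA (n : ℕ) : Set (EuclideanSpace ℝ (Fin (n + 1))) :=
  {v | ∃ p q : Fin (n + 1), p ≠ q ∧ v = eps (n + 1) p - eps (n + 1) q}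

/-- The Weyl group `W = S_{n+1}` of type `A_n`, realized as the set of isometries of
`ℝ^{n+1}` permuting the standard basis vectors `ε_1, …, ε_{n+1}`. -/
def WA (n : ℕ) : Set (EuclideanSpace ℝ (Fin (n + 1)) ≃ₗᵢ[ℝ] EuclideanSpace ℝ (Fin (n + 1))) :=
  {g | ∃ σ : Equiv.Perm (Fin (n + 1)), ∀ p, g (eps (n + 1) p) = eps (n + 1) (σ p)}

/-!
Write `u` as a permutation `τ ≠ 1` and let `t` be the least index it moves, so that `t < τ t` and
`ε_t - ε_{τ t}` is a positive root. It lies in some `Φ_{w_i}`, i.e. `σ (τ t) < σ t` for the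
permutation `σ` of `w_i`. Along a Bruhat chain every rank count `#{j ≤ t | π j ≤ r}` weakly
decreases, because a length-increasing right multiplication by a transposition `(p q)` with
`p < q` requires `π p < π q`. But `σ τ` has a strictly larger count than `σ` at `(t, σ (τ t))`:
the two permutations agree below `t`, and `t` itself is counted for `σ τ` only.
-/

open Finset

namespace Equiv.Perm

variable {α : Type*} [LinearOrder α] [Fintype α]

def inversions (σ : Perm α) : Finset (α × α) := {x | x.1 < x.2 ∧ σ x.2 < σ x.1}

@[simp]
lemma mem_inversions {σ : Perm α} {x : α × α} :
    x ∈ σ.inversions ↔ x.1 < x.2 ∧ σ x.2 < σ x.1 := by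
  simp [inversions]

/-- By the tableau criterion, Bruhat order on permutations is the reverse of the pointwise order
on these counts. -/
def rankCount (σ : Perm α) (t r : α) : ℕ := #{i | i ≤ t ∧ σ i ≤ r}

omit [Fintype α] in
lemma lt_of_swap_lt_swap {σ : Perm α} {p q i j : α} (hpq : p < q) (hσ : σ q < σ p)
    (hij : i < j) (hs : swap p q j < swap p q i) (hinv : σ (swap p q j) < σ (swap p q i)) :
    σ j < σ i := by
  simp only [swap_apply_def] at hs hinv
  split_ifs at hs hinv <;> subst_vars <;> order

/-- An inversion `(i, j)` of `σ * (p q)` is sent to `((p q) i, (p q) j)` when this pair is still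
increasing, and to itself otherwise. -/
lemma card_inversions_mul_swap_le {σ : Perm α} {p q : α} (hpq : p < q) (hσ : σ q < σ p) :
    #(σ * swap p q).inversions ≤ #σ.inversions := by
  refine card_le_card_of_injOn
    (fun x ↦ if swap p q x.1 < swap p q x.2 then (swap p q x.1, swap p q x.2) else x) ?_ ?_
  · rintro ⟨i, j⟩ hx
    simp only [mem_coe, mem_inversions, mul_apply] at hx ⊢
    split_ifs with h
    · exact ⟨h, hx.2⟩
    · exact ⟨hx.1, lt_of_swap_lt_swap hpq hσ hx.1
        (lt_of_le_of_ne (not_lt.1 h) ((swap p q).injective.ne hx.1.ne')) hx.2⟩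
  · rintro ⟨i, j⟩ hx ⟨i', j'⟩ hy hxy
    simp only [mem_coe, mem_inversions] at hx hy
    dsimp only at hxy
    split_ifs at hxy with h h' h' <;> simp only [Prod.mk.injEq] at hxy
    · simpa using hxy
    · obtain ⟨rfl, rfl⟩ := hxy
      exact absurd hx.1 (by simpa using h')
    · obtain ⟨rfl, rfl⟩ := hxy
      exact absurd hy.1 (by simpa using h)
    · simp [hxy]

lemma rankCount_mul_swap_le {σ : Perm α} {p q : α} (hpq : p < q) (hσ : σ p < σ q) (t r : α) :
    (σ * swap p q).rankCount t r ≤ σ.rankCount t r := by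
  unfold rankCount
  refine card_le_card_of_injOn (fun i ↦ if swap p q i ≤ t then swap p q i else i) ?_ ?_
  · intro i hi
    simp only [mem_coe, mem_filter, mem_univ, true_and] at hi ⊢
    rw [Perm.mul_apply] at hi
    split_ifs with h
    · exact ⟨h, hi.2⟩
    · refine ⟨hi.1, ?_⟩
      have hir := hi.2
      simp only [swap_apply_def] at h hir ⊢
      split_ifs at h hir <;> subst_vars <;> order
  · intro i hi j hj hij
    simp only [mem_coe, mem_filter, mem_univ, true_and] at hi hj hij
    simp only [swap_apply_def] at hi hj hij
    split_ifs at hi hj hij <;> subst_vars <;> order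

lemma rankCount_mul_swap_le_of_card_inversions_lt {σ : Perm α} {p q : α} (hpq : p ≠ q)
    (hlen : #σ.inversions < #(σ * swap p q).inversions) (t r : α) :
    (σ * swap p q).rankCount t r ≤ σ.rankCount t r := by
  wlog hlt : p < q generalizing p q
  · rw [swap_comm] at hlen ⊢
    exact this hpq.symm hlen (hpq.symm.lt_of_le (not_lt.1 hlt))
  have hσ : σ p < σ q := (σ.injective.ne hpq).lt_or_gt.resolve_right fun h ↦
    hlen.not_ge (card_inversions_mul_swap_le hlt h)
  exact rankCount_mul_swap_le hlt hσ t r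

lemma exists_lt_apply_of_ne_one {τ : Perm α} (hτ : τ ≠ 1) :
    ∃ t, t < τ t ∧ ∀ j < t, τ j = j := by
  obtain ⟨t, ht, hmin⟩ := τ.support.exists_min_image id
    (nonempty_iff_ne_empty.2 (support_eq_empty_iff.not.2 hτ))
  have hfix : ∀ j < t, τ j = j := fun j hj ↦ by
    by_contra h
    exact hj.not_ge (hmin j (mem_support.2 h))
  refine ⟨t, (le_of_not_gt fun h ↦ ?_).lt_of_ne' (mem_support.1 ht), hfix⟩
  exact mem_support.1 ht (τ.injective (hfix _ h))

lemma rankCount_lt_rankCount_mul {σ τ : Perm α} {t : α} (hfix : ∀ j < t, τ j = j)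
    (hσ : σ (τ t) < σ t) : σ.rankCount t (σ (τ t)) < (σ * τ).rankCount t (σ (τ t)) := by
  refine card_lt_card (ssubset_iff.2 ⟨t, by simp [hσ.not_ge], fun i hi ↦ ?_⟩)
  simp only [mem_insert, mem_filter, mem_univ, true_and] at hi ⊢
  rw [Perm.mul_apply]
  rcases hi with rfl | ⟨hit, hir⟩
  · exact ⟨le_rfl, le_rfl⟩
  · have hit' : i < t := hit.lt_of_ne (by rintro rfl; exact hir.not_gt hσ)
    exact ⟨hit, by rwa [hfix i hit']⟩

end Equiv.Perm

section

variable {m : ℕ}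

lemma eps_apply (p j : Fin m) : eps m p j = if j = p then 1 else 0 :=
  PiLp.single_apply 2 ℝ p 1 j

lemma eps_injective : Function.Injective (eps m) := fun p q h ↦ by
  simpa [eps_apply] using congrFun (congrArg (⇑) h) p

lemma eps_sub_eps_inj {a b c d : Fin m} (hab : a ≠ b)
    (h : eps m a - eps m b = eps m c - eps m d) : a = c ∧ b = d := by
  have ha := congrArg (· a) h
  have hb := congrArg (· b) h
  simp only [PiLp.sub_apply, eps_apply, if_neg hab.symm, if_neg hab] at ha hb
  constructor
  · split_ifs at ha <;> first | assumption | norm_num at ha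
  · split_ifs at hb <;> first | assumption | norm_num at hb

lemma reflRoot_eps_sub_eps {p q : Fin m} (hpq : p ≠ q) (j : Fin m) :
    reflRoot (eps m p - eps m q) (eps m j) = eps m (Equiv.swap p q j) := by
  have hnorm : ‖eps m p‖ = ‖eps m q‖ := by simp [eps, PiLp.norm_single]
  have hp : reflRoot (eps m p - eps m q) (eps m p) = eps m q := Submodule.reflection_sub hnorm
  have hq : reflRoot (eps m p - eps m q) (eps m q) = eps m p := by
    simpa only [reflRoot, Submodule.reflection_reflection] using
      (congrArg (reflRoot (eps m p - eps m q)) hp).symm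
  rcases eq_or_ne j p with rfl | hjp
  · rw [Equiv.swap_apply_left, hp]
  rcases eq_or_ne j q with rfl | hjq
  · rw [Equiv.swap_apply_right, hq]
  rw [Equiv.swap_apply_of_ne_of_ne hjp hjq]
  refine Submodule.reflection_mem_subspace_eq_self
    (Submodule.mem_orthogonal_singleton_iff_inner_right.2 ?_)
  simp [eps, inner_sub_left, EuclideanSpace.inner_single_left, hjp, hjq]

lemma mul_reflRoot_eps {g : EuclideanSpace ℝ (Fin m) ≃ₗᵢ[ℝ] EuclideanSpace ℝ (Fin m)}
    {σ : Equiv.Perm (Fin m)} (hg : ∀ p, g (eps m p) = eps m (σ p)) {p q : Fin m} (hpq : p ≠ q)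
    (j : Fin m) :
    (g * reflRoot (eps m p - eps m q)) (eps m j) = eps m ((σ * Equiv.swap p q) j) := by
  rw [LinearIsometryEquiv.coe_mul, Function.comp_apply, reflRoot_eps_sub_eps hpq, hg,
    Equiv.Perm.mul_apply]

lemma eq_one_of_forall_apply_eps
    {g : EuclideanSpace ℝ (Fin m) ≃ₗᵢ[ℝ] EuclideanSpace ℝ (Fin m)}
    (h : ∀ p, g (eps m p) = eps m p) : g = 1 :=
  LinearIsometryEquiv.toLinearEquiv_injective <|
    (EuclideanSpace.basisFun (Fin m) ℝ).toBasis.ext' <| by simpa [eps] using h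

end

section

variable {n : ℕ}

lemma eps_sub_eps_mem_posA_iff {p q : Fin (n + 1)} (hpq : p ≠ q) :
    eps (n + 1) p - eps (n + 1) q ∈ posA n ↔ p < q := by
  refine ⟨fun ⟨a, b, hab, h⟩ ↦ ?_, fun h ↦ ⟨p, q, h, rfl⟩⟩
  obtain ⟨rfl, rfl⟩ := eps_sub_eps_inj hpq h
  exact hab

lemma eps_sub_eps_mem_invSet_iff
    {g : EuclideanSpace ℝ (Fin (n + 1)) ≃ₗᵢ[ℝ] EuclideanSpace ℝ (Fin (n + 1))}
    {σ : Equiv.Perm (Fin (n + 1))} (hg : ∀ p, g (eps (n + 1) p) = eps (n + 1) (σ p))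
    {p q : Fin (n + 1)} (hpq : p < q) :
    eps (n + 1) p - eps (n + 1) q ∈ invSet (posA n) g ↔ σ q < σ p := by
  rw [invSet, Set.mem_ofPred_eq, map_sub, hg, hg, neg_sub,
    eps_sub_eps_mem_posA_iff hpq.ne, eps_sub_eps_mem_posA_iff (σ.injective.ne hpq.ne')]
  exact and_iff_right hpq

lemma invSet_posA_eq
    {g : EuclideanSpace ℝ (Fin (n + 1)) ≃ₗᵢ[ℝ] EuclideanSpace ℝ (Fin (n + 1))}
    {σ : Equiv.Perm (Fin (n + 1))} (hg : ∀ p, g (eps (n + 1) p) = eps (n + 1) (σ p)) :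
    invSet (posA n) g =
      (fun x : Fin (n + 1) × Fin (n + 1) ↦ eps (n + 1) x.1 - eps (n + 1) x.2) '' σ.inversions := by
  ext v
  constructor
  · rintro ⟨⟨p, q, hpq, rfl⟩, hv⟩
    refine ⟨(p, q), Equiv.Perm.mem_inversions.2 ⟨hpq, ?_⟩, rfl⟩
    exact (eps_sub_eps_mem_invSet_iff hg hpq).1 ⟨⟨p, q, hpq, rfl⟩, hv⟩
  · rintro ⟨⟨p, q⟩, hx, rfl⟩
    rw [mem_coe, Equiv.Perm.mem_inversions] at hx
    exact (eps_sub_eps_mem_invSet_iff hg hx.1).2 hx.2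

lemma invLen_posA_eq
    {g : EuclideanSpace ℝ (Fin (n + 1)) ≃ₗᵢ[ℝ] EuclideanSpace ℝ (Fin (n + 1))}
    {σ : Equiv.Perm (Fin (n + 1))} (hg : ∀ p, g (eps (n + 1) p) = eps (n + 1) (σ p)) :
    invLen (posA n) g = #σ.inversions := by
  have hinj : Set.InjOn (fun x : Fin (n + 1) × Fin (n + 1) ↦ eps (n + 1) x.1 - eps (n + 1) x.2)
      σ.inversions := by
    rintro ⟨a, b⟩ hx ⟨c, d⟩ - h
    obtain ⟨rfl, rfl⟩ := eps_sub_eps_inj (Equiv.Perm.mem_inversions.1 hx).1.ne h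
    rfl
  rw [invLen, invSet_posA_eq hg, hinj.ncard_image, Set.ncard_coe_finset]

lemma exists_rankCount_le_of_bruhatLE
    {x y : EuclideanSpace ℝ (Fin (n + 1)) ≃ₗᵢ[ℝ] EuclideanSpace ℝ (Fin (n + 1))}
    {σ : Equiv.Perm (Fin (n + 1))} (hx : ∀ p, x (eps (n + 1) p) = eps (n + 1) (σ p))
    (hxy : bruhatLE (rootsA n) (posA n) x y) :
    ∃ π : Equiv.Perm (Fin (n + 1)), (∀ p, y (eps (n + 1) p) = eps (n + 1) (π p)) ∧
      ∀ t r, π.rankCount t r ≤ σ.rankCount t r := by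
  induction hxy with
  | refl => exact ⟨σ, hx, fun _ _ ↦ le_rfl⟩
  | tail _ hstep ih =>
    obtain ⟨π, hπ, hle⟩ := ih
    obtain ⟨⟨_, ⟨p, q, hpq, rfl⟩, rfl⟩, hlen⟩ := hstep
    have hmul := mul_reflRoot_eps hπ hpq
    rw [invLen_posA_eq hπ, invLen_posA_eq hmul] at hlen
    exact ⟨π * Equiv.swap p q, hmul, fun t r ↦
      (π.rankCount_mul_swap_le_of_card_inversions_lt hpq hlen t r).trans (hle t r)⟩

end

theorem statement0_general (n : ℕ) (k : ℕ)
    (w : Fin k → (EuclideanSpace ℝ (Fin (n + 1)) ≃ₗᵢ[ℝ] EuclideanSpace ℝ (Fin (n + 1))))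
    (hw : ∀ i, w i ∈ WA n)
    (hcover : posA n = ⋃ i, invSet (posA n) (w i))
    (u : EuclideanSpace ℝ (Fin (n + 1)) ≃ₗᵢ[ℝ] EuclideanSpace ℝ (Fin (n + 1)))
    (hu : u ∈ WA n)
    (hle : ∀ i, bruhatLE (rootsA n) (posA n) (w i) (w i * u)) :
    u = 1 := by
  obtain ⟨τ, hτ⟩ := hu
  by_contra hu1
  have hτ1 : τ ≠ 1 := by
    rintro rfl
    exact hu1 (eq_one_of_forall_apply_eps hτ)
  obtain ⟨t, ht, hfix⟩ := τ.exists_lt_apply_of_ne_one hτ1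
  have hroot : eps (n + 1) t - eps (n + 1) (τ t) ∈ posA n := ⟨t, τ t, ht, rfl⟩
  rw [hcover] at hroot
  obtain ⟨i, hi⟩ := Set.mem_iUnion.1 hroot
  obtain ⟨σ, hσ⟩ := hw i
  obtain ⟨π, hπ, hrank⟩ := exists_rankCount_le_of_bruhatLE hσ (hle i)
  have hπστ : π = σ * τ := Equiv.ext fun p ↦ eps_injective <| by
    rw [← hπ, LinearIsometryEquiv.coe_mul, Function.comp_apply, hτ, hσ, Equiv.Perm.mul_apply]
  exact (hrank t (σ (τ t))).not_gt <| hπστ ▸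
    σ.rankCount_lt_rankCount_mul hfix ((eps_sub_eps_mem_invSet_iff hσ ht).1 hi)

/-- In type `A_n` (`n ≥ 1`), if `Δ⁺ = Φ_{w_1} ⊔ ⋯ ⊔ Φ_{w_k}` and `u ∈ W`
satisfies `w_i ≤ w_i u` in the Bruhat order for all `i`, then `u = e`. -/
theorem statement0 (n : ℕ) (hn : 1 ≤ n) (k : ℕ)
    (w : Fin k → (EuclideanSpace ℝ (Fin (n + 1)) ≃ₗᵢ[ℝ] EuclideanSpace ℝ (Fin (n + 1))))
    (hw : ∀ i, w i ∈ WA n)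
    (hcover : posA n = ⋃ i, invSet (posA n) (w i))
    (hdisj : ∀ i j, i ≠ j → Disjoint (invSet (posA n) (w i)) (invSet (posA n) (w j)))
    (u : EuclideanSpace ℝ (Fin (n + 1)) ≃ₗᵢ[ℝ] EuclideanSpace ℝ (Fin (n + 1)))
    (hu : u ∈ WA n)
    (hle : ∀ i, bruhatLE (rootsA n) (posA n) (w i) (w i * u)) :
    u = 1 :=
  statement0_general n k w hw hcover u hu hle

end
end

section
/- Let n ≥ 2 and let W be the Weyl group of type D_n. Suppose w_1, …, w_k ∈ W satisfy Δ⁺ = Φ_{w_1} ⊔ Φ_{w_2} ⊔ ⋯ ⊔ Φ_{w_k} (disjoint union). Then there exists an index i such that either w_i(ε_1) = −ε_p for some p ∈ {1, …, n}, or w_i(ε_1) = ε_n. -/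
open RealInnerProductSpace

noncomputable section

variable {V : Type*} [NormedAddCommGroup V] [InnerProductSpace ℝ V] [FiniteDimensional ℝ V]

/-- The group of signed permutations: isometries of `ℝ^n` sending each standard basis
vector to plus or minus a standard basis vector. -/
def signedPerm (n : ℕ) : Set (EuclideanSpace ℝ (Fin n) ≃ₗᵢ[ℝ] EuclideanSpace ℝ (Fin n)) :=
  {g | ∀ p, ∃ q, g (eps n p) = eps n q ∨ g (eps n p) = -eps n q}

/-- The group of even-signed permutations: signed permutations with an even number of
sign changes. -/
def evenSignedPerm (n : ℕ) :
    Set (EuclideanSpace ℝ (Fin n) ≃ₗᵢ[ℝ] EuclideanSpace ℝ (Fin n)) :=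
  {g | g ∈ signedPerm n ∧ Even (Set.ncard {p : Fin n | ∃ q, g (eps n p) = -eps n q})}

/-- The positive roots of type `B_n`: `ε_p` and `ε_p ± ε_q` for `p < q`. -/
def posB (n : ℕ) : Set (EuclideanSpace ℝ (Fin n)) :=
  {v | (∃ p, v = eps n p) ∨
    ∃ p q : Fin n, p < q ∧ (v = eps n p + eps n q ∨ v = eps n p - eps n q)}

/-- The roots of type `B_n`. -/
def rootsB (n : ℕ) : Set (EuclideanSpace ℝ (Fin n)) := {v | v ∈ posB n ∨ -v ∈ posB n}

/-- The positive roots of type `C_n`: `2ε_p` and `ε_p ± ε_q` for `p < q`. -/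
def posC (n : ℕ) : Set (EuclideanSpace ℝ (Fin n)) :=
  {v | (∃ p, v = (2 : ℝ) • eps n p) ∨
    ∃ p q : Fin n, p < q ∧ (v = eps n p + eps n q ∨ v = eps n p - eps n q)}

/-- The roots of type `C_n`. -/
def rootsC (n : ℕ) : Set (EuclideanSpace ℝ (Fin n)) := {v | v ∈ posC n ∨ -v ∈ posC n}

/-- The positive roots of type `D_n`: `ε_p ± ε_q` for `p < q`. -/
def posD (n : ℕ) : Set (EuclideanSpace ℝ (Fin n)) :=
  {v | ∃ p q : Fin n, p < q ∧ (v = eps n p + eps n q ∨ v = eps n p - eps n q)}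

/-- The roots of type `D_n`. -/
def rootsD (n : ℕ) : Set (EuclideanSpace ℝ (Fin n)) := {v | v ∈ posD n ∨ -v ∈ posD n}

/-!
Pair everything with `ρ = (n-1, n-2, …, 0)`, half the sum of the positive roots: a root of `D_n`
is positive iff it pairs positively with `ρ`. Hence for a signed permutation `w`, writing
`c p = ⟪ρ, w ε_p⟫`, the root `ε_p + ε_q` is an inversion of `w` iff `c p + c q < 0`, and
`ε_p - ε_q` (`p < q`) is one iff `c p < c q`.

If the theorem failed, every `w_i` would send `ε_1` to some `ε_b` with `b < n`, i.e. `c_i 1 > 0`.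
Let `w_i` be the element inverting `ε_1 + ε_2`. Playing the six positive roots supported on
`{1, 2, y}` against the partition shows `c_i 1 < |c_i y|` for every `y ≠ 1`. But `w_i` sends some
`ε_y` to `±ε_n`, and then `c_i y = 0`.
-/

namespace TypeD

variable {n : ℕ}

def IsSignedEps (a : Fin n) (u : EuclideanSpace ℝ (Fin n)) : Prop :=
  u = eps n a ∨ u = -eps n a

theorem IsSignedEps.neg {a : Fin n} {u : EuclideanSpace ℝ (Fin n)} (hu : IsSignedEps a u) :
    IsSignedEps a (-u) := by
  rcases hu with rfl | rfl
  · exact Or.inr rfl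
  · exact Or.inl (neg_neg _)

theorem inner_eps_eps (a b : Fin n) : ⟪eps n a, eps n b⟫ = if a = b then 1 else 0 := by
  simp [eps, EuclideanSpace.inner_single_left]

theorem IsSignedEps.inner_ne_zero {a : Fin n} {u v : EuclideanSpace ℝ (Fin n)}
    (hu : IsSignedEps a u) (hv : IsSignedEps a v) : ⟪u, v⟫ ≠ 0 := by
  rcases hu with rfl | rfl <;> rcases hv with rfl | rfl <;>
    simp only [inner_neg_left, inner_neg_right, inner_eps_eps] <;> norm_num

theorem eq_of_isSignedEps_map_eps (w : EuclideanSpace ℝ (Fin n) ≃ₗᵢ[ℝ] EuclideanSpace ℝ (Fin n))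
    {p q a : Fin n} (hp : IsSignedEps a (w (eps n p))) (hq : IsSignedEps a (w (eps n q))) :
    p = q := by
  by_contra hpq
  apply hp.inner_ne_zero hq
  rw [w.inner_map_map, inner_eps_eps, if_neg hpq]

theorem exists_isSignedEps_map_eps {w : EuclideanSpace ℝ (Fin n) ≃ₗᵢ[ℝ] EuclideanSpace ℝ (Fin n)}
    (hw : w ∈ signedPerm n) (a : Fin n) : ∃ p, IsSignedEps a (w (eps n p)) := by
  choose b hb using hw
  have hb_inj : Function.Injective b := fun p q hpq =>
    eq_of_isSignedEps_map_eps w (hb p) (hpq ▸ hb q)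
  obtain ⟨p, rfl⟩ := Finite.injective_iff_surjective.mp hb_inj a
  exact ⟨p, hb p⟩

def rhoD (n : ℕ) : EuclideanSpace ℝ (Fin n) := WithLp.toLp 2 fun a => (n : ℝ) - 1 - a

theorem inner_rhoD_eps (a : Fin n) : ⟪rhoD n, eps n a⟫ = n - 1 - a := by
  simp [eps, EuclideanSpace.inner_single_right, rhoD]

theorem inner_rhoD_eps_nonneg (a : Fin n) : 0 ≤ ⟪rhoD n, eps n a⟫ := by
  have : (a : ℝ) + 1 ≤ n := by exact_mod_cast a.isLt
  rw [inner_rhoD_eps]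
  linarith

theorem inner_rhoD_eps_lt {a b : Fin n} (hab : a < b) :
    ⟪rhoD n, eps n b⟫ < ⟪rhoD n, eps n a⟫ := by
  have : (a : ℝ) < b := by exact_mod_cast hab
  rw [inner_rhoD_eps, inner_rhoD_eps]
  linarith

theorem inner_rhoD_eps_eq_zero_iff (a : Fin n) : ⟪rhoD n, eps n a⟫ = 0 ↔ (a : ℕ) = n - 1 := by
  have : (a : ℕ) + 1 ≤ n := a.isLt
  rw [inner_rhoD_eps, sub_sub, sub_eq_zero]
  constructor
  · intro h
    have : n = (a : ℕ) + 1 := by exact_mod_cast h.trans (add_comm _ _)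
    omega
  · intro h
    have : (n : ℝ) = a + 1 := by exact_mod_cast (show n = (a : ℕ) + 1 by omega)
    linarith

theorem inner_rhoD_pos_of_mem_posD {α : EuclideanSpace ℝ (Fin n)} (hα : α ∈ posD n) :
    0 < ⟪rhoD n, α⟫ := by
  obtain ⟨p, q, hpq, rfl | rfl⟩ := hα
  · rw [inner_add_right]
    linarith [inner_rhoD_eps_lt hpq, inner_rhoD_eps_nonneg q]
  · rw [inner_sub_right]
    linarith [inner_rhoD_eps_lt hpq]

theorem add_mem_posD_of_inner_rhoD_pos {a b : Fin n} (hab : a < b)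
    {u v : EuclideanSpace ℝ (Fin n)} (hu : IsSignedEps a u) (hv : IsSignedEps b v)
    (h : 0 < ⟪rhoD n, u + v⟫) : u + v ∈ posD n := by
  have hlt := inner_rhoD_eps_lt hab
  rcases hu with rfl | rfl <;> rcases hv with rfl | rfl
  · exact ⟨a, b, hab, Or.inl rfl⟩
  · exact ⟨a, b, hab, Or.inr (sub_eq_add_neg _ _)⟩
  all_goals
    simp only [inner_add_right, inner_neg_right] at h
    linarith [inner_rhoD_eps_nonneg b]

theorem add_mem_posD_iff {a b : Fin n} (hab : a ≠ b) {u v : EuclideanSpace ℝ (Fin n)}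
    (hu : IsSignedEps a u) (hv : IsSignedEps b v) :
    u + v ∈ posD n ↔ 0 < ⟪rhoD n, u + v⟫ := by
  refine ⟨inner_rhoD_pos_of_mem_posD, fun h => ?_⟩
  rcases hab.lt_or_gt with hab | hab
  · exact add_mem_posD_of_inner_rhoD_pos hab hu hv h
  · rw [add_comm] at h ⊢
    exact add_mem_posD_of_inner_rhoD_pos hab hv hu h

theorem mem_invSet_posD_iff {w : EuclideanSpace ℝ (Fin n) ≃ₗᵢ[ℝ] EuclideanSpace ℝ (Fin n)}
    (hw : w ∈ signedPerm n) {α : EuclideanSpace ℝ (Fin n)} (hα : α ∈ posD n) :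
    α ∈ invSet (posD n) w ↔ ⟪rhoD n, w α⟫ < 0 := by
  suffices -(w α) ∈ posD n ↔ 0 < ⟪rhoD n, -(w α)⟫ by
    rw [inner_neg_right, neg_pos] at this
    exact (and_iff_right hα).trans this
  obtain ⟨p, q, hpq, rfl | rfl⟩ := hα <;>
    obtain ⟨a, ha⟩ : ∃ a, IsSignedEps a (w (eps n p)) := hw p <;>
    obtain ⟨b, hb⟩ : ∃ b, IsSignedEps b (w (eps n q)) := hw q <;>
    have hab : a ≠ b := fun h => hpq.ne (eq_of_isSignedEps_map_eps w ha (h ▸ hb))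
  · rw [map_add, neg_add]
    exact add_mem_posD_iff hab ha.neg hb.neg
  · rw [map_sub, neg_sub', sub_neg_eq_add]
    exact add_mem_posD_iff hab ha.neg hb

/-- Read `c i p` as `⟪ρ, w_i ε_p⟫`: then this says that every positive root `ε_p ± ε_q` is an
inversion of exactly one `w_i`. -/
def IsInversionPartition {κ ι : Type*} [LT ι] (c : κ → ι → ℝ) : Prop :=
  ∀ p q, p < q → (∃! i, c i p + c i q < 0) ∧ ∃! i, c i p < c i q

theorem IsInversionPartition.lt_abs {κ ι : Type*} [Preorder ι] {c : κ → ι → ℝ}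
    (hc : IsInversionPartition c) {x o y : ι} (hxo : x < o) (hoy : o < y)
    (hpos : ∀ i, 0 < c i x) {i : κ} (hi : c i x + c i o < 0) : c i x < |c i y| := by
  by_contra! hle
  obtain ⟨hyl, hyu⟩ := abs_le.mp hle
  have hxy := hxo.trans hoy
  obtain ⟨j, hj, -⟩ := (hc x y hxy).1
  have hjo : c j x < c j o := by
    by_contra! h
    obtain rfl : j = i := (hc o y hoy).1.unique (by linarith) (by linarith)
    linarith
  obtain ⟨l, hl, -⟩ := (hc x y hxy).2
  by_cases hlo : c l o < c l y
  · obtain rfl : l = i := (hc o y hoy).2.unique hlo (by linarith)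
    linarith
  · obtain rfl : l = j := (hc x o hxo).2.unique (by linarith) hjo
    linarith [hpos l]

theorem existsUnique_mem_invSet {E κ : Type*} [NormedAddCommGroup E] [InnerProductSpace ℝ E]
    {pos : Set E} {w : κ → E ≃ₗᵢ[ℝ] E} (hcover : pos = ⋃ i, invSet pos (w i))
    (hdisj : ∀ i j, i ≠ j → Disjoint (invSet pos (w i)) (invSet pos (w j)))
    {α : E} (hα : α ∈ pos) : ∃! i, α ∈ invSet pos (w i) := by
  obtain ⟨i, hi⟩ := Set.mem_iUnion.mp (hcover ▸ hα)
  exact ⟨i, hi, fun j hj => by_contra fun hji => Set.disjoint_left.mp (hdisj j i hji) hj hi⟩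

theorem isInversionPartition_inner_rhoD {κ : Type*}
    {w : κ → EuclideanSpace ℝ (Fin n) ≃ₗᵢ[ℝ] EuclideanSpace ℝ (Fin n)}
    (hw : ∀ i, w i ∈ signedPerm n) (hcover : posD n = ⋃ i, invSet (posD n) (w i))
    (hdisj : ∀ i j, i ≠ j → Disjoint (invSet (posD n) (w i)) (invSet (posD n) (w j))) :
    IsInversionPartition fun i p => ⟪rhoD n, w i (eps n p)⟫ := by
  have huniq : ∀ α ∈ posD n, ∃! i, ⟪rhoD n, w i α⟫ < 0 := fun α hα =>
    (existsUnique_congr fun i => mem_invSet_posD_iff (hw i) hα).mp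
      (existsUnique_mem_invSet hcover hdisj hα)
  intro p q hpq
  constructor
  · simpa only [map_add, inner_add_right] using huniq _ ⟨p, q, hpq, Or.inl rfl⟩
  · simpa only [map_sub, inner_sub_right, sub_neg] using huniq _ ⟨p, q, hpq, Or.inr rfl⟩

end TypeD

open TypeD

/-- In type `D_n` (`n ≥ 2`), if `Δ⁺ = Φ_{w_1} ⊔ ⋯ ⊔ Φ_{w_k}` then there is an
index `i` with `w_i(ε_1) = -ε_p` for some `p`, or `w_i(ε_1) = ε_n`. -/
theorem statement6 (n : ℕ) (hn : 2 ≤ n) (k : ℕ)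
    (w : Fin k → (EuclideanSpace ℝ (Fin n) ≃ₗᵢ[ℝ] EuclideanSpace ℝ (Fin n)))
    (hw : ∀ i, w i ∈ evenSignedPerm n)
    (hcover : posD n = ⋃ i, invSet (posD n) (w i))
    (hdisj : ∀ i j, i ≠ j → Disjoint (invSet (posD n) (w i)) (invSet (posD n) (w j))) :
    ∃ i, (∃ p : Fin n, (w i) (eps n ⟨0, by omega⟩) = -eps n p) ∨
      (w i) (eps n ⟨0, by omega⟩) = eps n ⟨n - 1, by omega⟩ := by
  by_contra! hcon
  have hc := isInversionPartition_inner_rhoD (fun i => (hw i).1) hcover hdisj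
  set c : Fin k → Fin n → ℝ := fun i p => ⟪rhoD n, w i (eps n p)⟫
  have hpos : ∀ i, 0 < c i ⟨0, by omega⟩ := by
    intro i
    obtain ⟨a, ha | ha⟩ := (hw i).1 ⟨0, by omega⟩
    · have hlast : (a : ℕ) ≠ n - 1 := fun h => (hcon i).2 (ha.trans (congrArg _ (Fin.ext h)))
      simp only [c, ha]
      exact (inner_rhoD_eps_nonneg a).lt_of_ne' ((inner_rhoD_eps_eq_zero_iff a).not.mpr hlast)
    · exact absurd ha ((hcon i).1 a)
  obtain ⟨i, hi, -⟩ := (hc ⟨0, by omega⟩ ⟨1, by omega⟩ (by simp [Fin.lt_def])).1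
  obtain ⟨y, hy⟩ := exists_isSignedEps_map_eps (hw i).1 ⟨n - 1, by omega⟩
  have hcy : c i y = 0 := by
    rcases hy with hy | hy <;> simp [c, hy, inner_rhoD_eps_eq_zero_iff]
  obtain ⟨_ | _ | y, hyn⟩ := y
  · linarith [hpos i]
  · linarith [hpos i]
  · have := hc.lt_abs (y := ⟨y + 2, hyn⟩) (by simp [Fin.lt_def]) (by simp [Fin.lt_def]) hpos hi
    rw [hcy, abs_zero] at this
    linarith [hpos i]
end
end
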